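/- Corollary: With K, μ as in the compact-case theorem, every y in the interior of R_{2d}(K) has a representing measure of the form dν = e^{p} dμ for some polynomial p of degree ≤ 2d, i.e., y(x^α) = ∫_K x^α e^{p(x)} dμ(x) for all |α| ≤ 2d. -/

import Mathlib

/-!
Maximum-entropy duality. Identify a polynomial `p_c` of degree `≤ 2d` with its coefficient
vector `c` and minimise the convex dual `G c = ∫_K exp (p_c) dμ - ⟨c, y⟩`. Since
`exp t ≥ (t⁺)² / 2`, along a ray `G (s • u) ≥ s² / 2 · ∫_K (p_u⁺)² dμ - s ⟨u, y⟩`. For `u ≠ 0`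
either that integral is positive, or `p_u ≤ 0` on `K` (as `μ` charges every open subset of
`U`), and then `⟨u, y⟩ < 0` because `y` is interior to the cone and `p_u` does not vanish
on `U`. Compactness of the unit sphere makes `G` coercive, so it has a minimiser `c`, and the
vanishing of `∂G/∂c_α = ∫_K x^α exp (p_c) dμ - y_α` gives the moment equations.
-/

open MeasureTheory

/-- The space of truncated moment sequences: real sequences indexed by monomials
(exponent vectors) of total degree at most `d` in `n` variables; this is the
(coordinatized) dual space `ℝ[x]_d^*`. -/
abbrev MomSpace (n d : ℕ) := {α : Fin n →₀ ℕ // (α.sum fun _ e => e) ≤ d} → ℝ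

/-- Evaluation of the monomial `x^α` at the point `v`. -/
def evalMono {n : ℕ} (v : Fin n → ℝ) (α : Fin n →₀ ℕ) : ℝ :=
  α.prod fun i k => v i ^ k

/-- The point-evaluation functional `ℓ_v` on `ℝ[x]_d`, in moment coordinates. -/
def Lmap (n d : ℕ) (v : Fin n → ℝ) : MomSpace n d := fun α => evalMono v α.1

/-- The pairing `⟨p, y⟩` between a polynomial `p` (of degree ≤ d) and a moment
sequence `y`; it equals `ℓ(p)` for the functional `ℓ` with moments `y`. -/
noncomputable def momPair {n d : ℕ} (y : MomSpace n d)
    (p : MvPolynomial (Fin n) ℝ) : ℝ :=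
  ∑ α ∈ p.support, p.coeff α *
    (if h : (α.sum fun _ e => e) ≤ d then y ⟨α, h⟩ else 0)

/-- The conical hull of a set: all finite nonnegative combinations. -/
def conicalHull {V : Type*} [AddCommMonoid V] [Module ℝ V] (s : Set V) : Set V :=
  {y | ∃ (k : ℕ) (c : Fin k → ℝ) (z : Fin k → V),
    (∀ i, 0 ≤ c i) ∧ (∀ i, z i ∈ s) ∧ y = ∑ i, c i • z i}

/-- The cone `R_{2d}(K)` of moment sequences representable by a finite Borel
measure supported on `K`. -/
def RepCone (n d : ℕ) (K : Set (Fin n → ℝ)) : Set (MomSpace n d) :=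
  {y | ∃ σ : Measure (Fin n → ℝ), IsFiniteMeasure σ ∧ σ Kᶜ = 0 ∧
    ∀ α : {α : Fin n →₀ ℕ // (α.sum fun _ e => e) ≤ d},
      y α = ∫ v in K, evalMono v α.1 ∂σ}

open scoped ENNReal

open Filter Topology Set

abbrev Exponent (n m : ℕ) := {α : Fin n →₀ ℕ // (α.sum fun _ e => e) ≤ m}

instance (n m : ℕ) : Finite (Exponent n m) := Finsupp.finite_of_degree_le m

noncomputable instance (n m : ℕ) : Fintype (Exponent n m) := Fintype.ofFinite _

@[fun_prop]
theorem continuous_Lmap (n m : ℕ) : Continuous (Lmap n m) :=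
  continuous_pi fun _ => continuous_finsetProd _ fun i _ => (continuous_apply i).pow _

noncomputable def polyOf {n m : ℕ} (c : Exponent n m → ℝ) : MvPolynomial (Fin n) ℝ :=
  ∑ α, MvPolynomial.monomial α.1 (c α)

theorem eval_polyOf {n m : ℕ} (c : Exponent n m → ℝ) (x : Fin n → ℝ) :
    MvPolynomial.eval x (polyOf c) = c ⬝ᵥ Lmap n m x := by
  simp [polyOf, dotProduct, Lmap, evalMono, MvPolynomial.eval_monomial]

theorem totalDegree_polyOf {n m : ℕ} (c : Exponent n m → ℝ) : (polyOf c).totalDegree ≤ m :=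
  (MvPolynomial.totalDegree_finsetSum _ _).trans <|
    Finset.sup_le fun α _ => (MvPolynomial.totalDegree_monomial_le _ _).trans α.2

theorem coeff_polyOf {n m : ℕ} (c : Exponent n m → ℝ) (α : Exponent n m) :
    (polyOf c).coeff α.1 = c α := by
  classical
  simp [polyOf, MvPolynomial.coeff_sum, MvPolynomial.coeff_monomial, Subtype.val_inj]

theorem MvPolynomial.eq_zero_of_eval_eq_zero_on_open {σ : Type*} [Fintype σ]
    {p : MvPolynomial σ ℝ} {U : Set (σ → ℝ)} (hU : IsOpen U) (hne : U.Nonempty)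
    (h : ∀ x ∈ U, eval x p = 0) : p = 0 := by
  obtain ⟨a, ha⟩ := hne
  obtain ⟨δ, hδ, hball⟩ := Metric.isOpen_iff.mp hU a ha
  refine funext_set (fun i => Metric.ball (a i) δ) (fun i => ?_) fun x hx => ?_
  · rw [Real.ball_eq_Ioo]; exact Ioo_infinite (by linarith)
  · rw [map_zero]
    exact h x (hball (by rwa [ball_pi _ hδ]))

theorem eq_zero_of_dotProduct_Lmap_eq_zero {n m : ℕ} {U : Set (Fin n → ℝ)} (hU : IsOpen U)
    (hne : U.Nonempty) {c : Exponent n m → ℝ} (h : ∀ x ∈ U, c ⬝ᵥ Lmap n m x = 0) : c = 0 := by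
  have hp : polyOf c = 0 :=
    MvPolynomial.eq_zero_of_eval_eq_zero_on_open hU hne fun x hx => by rw [eval_polyOf, h x hx]
  funext α
  rw [← coeff_polyOf c α, hp, MvPolynomial.coeff_zero, Pi.zero_apply]

theorem dotProduct_eq_integral_of_mem_repCone {n m : ℕ} {K : Set (Fin n → ℝ)} (hK : IsCompact K)
    {z : MomSpace n m} (hz : z ∈ RepCone n m K) :
    ∃ σ : Measure (Fin n → ℝ), IsFiniteMeasure σ ∧
      ∀ c : Exponent n m → ℝ, c ⬝ᵥ z = ∫ x in K, c ⬝ᵥ Lmap n m x ∂σ := by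
  obtain ⟨σ, hσ, -, hmom⟩ := hz
  refine ⟨σ, hσ, fun c => ?_⟩
  have hint (α : Exponent n m) : IntegrableOn (fun x => c α * evalMono x α.1) K σ :=
    ((continuous_apply α).comp (continuous_Lmap n m)).continuousOn.integrableOn_compact hK
      |>.const_mul _
  simp only [dotProduct, Lmap, hmom]
  rw [integral_finsetSum _ fun α _ => hint α]
  simp_rw [integral_const_mul]

theorem dotProduct_nonneg_of_mem_repCone {n m : ℕ} {K : Set (Fin n → ℝ)} (hK : IsCompact K)
    {z : MomSpace n m} (hz : z ∈ RepCone n m K) {c : Exponent n m → ℝ}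
    (hc : ∀ x ∈ K, 0 ≤ c ⬝ᵥ Lmap n m x) : 0 ≤ c ⬝ᵥ z := by
  obtain ⟨σ, -, hσ⟩ := dotProduct_eq_integral_of_mem_repCone hK hz
  rw [hσ]
  exact setIntegral_nonneg hK.measurableSet hc

theorem dotProduct_neg_of_mem_interior_repCone {n m : ℕ} {K : Set (Fin n → ℝ)}
    (hK : IsCompact K) (hKint : (interior K).Nonempty) {y : MomSpace n m}
    (hy : y ∈ interior (RepCone n m K)) {c : Exponent n m → ℝ} (hc0 : c ≠ 0)
    (hc : ∀ x ∈ K, c ⬝ᵥ Lmap n m x ≤ 0) : c ⬝ᵥ y < 0 := by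
  obtain ⟨v, -, hv⟩ : ∃ v ∈ K, c ⬝ᵥ Lmap n m v < 0 := by
    by_contra! h
    exact hc0 <| eq_zero_of_dotProduct_Lmap_eq_zero isOpen_interior hKint fun x hx =>
      le_antisymm (hc x (interior_subset hx)) (h x (interior_subset hx))
  have hnear : ∀ᶠ t in 𝓝[>] (0 : ℝ), y - t • Lmap n m v ∈ interior (RepCone n m K) := by
    have hlim : Tendsto (fun t : ℝ => y - t • Lmap n m v) (𝓝 0) (𝓝 y) := by
      simpa using ((tendsto_id (x := 𝓝 (0 : ℝ))).smul_const (Lmap n m v)).const_sub y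
    exact nhdsWithin_le_nhds (hlim.eventually (isOpen_interior.mem_nhds hy))
  obtain ⟨t, ht, htpos⟩ := (hnear.and self_mem_nhdsWithin).exists
  have := dotProduct_nonneg_of_mem_repCone hK (interior_subset ht) (c := -c) fun x hx => by
    simpa [neg_dotProduct] using hc x hx
  simp only [neg_dotProduct, dotProduct_sub, dotProduct_smul, smul_eq_mul] at this
  nlinarith [mul_neg_of_pos_of_neg (show (0:ℝ) < t from htpos) hv]

theorem hasDerivAt_setIntegral_of_continuous {X : Type*} [TopologicalSpace X]
    [T2Space X] [MeasurableSpace X] [OpensMeasurableSpace X] {μ : Measure X}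
    [IsLocallyFiniteMeasure μ]
    {K : Set X} (hK : IsCompact K) {F F' : ℝ → X → ℝ} (hF : ∀ t, Continuous (F t))
    (hF' : Continuous F'.uncurry) (hderiv : ∀ t x, HasDerivAt (F · x) (F' t x) t) (t₀ : ℝ) :
    HasDerivAt (fun t => ∫ x in K, F t x ∂μ) (∫ x in K, F' t₀ x ∂μ) t₀ := by
  obtain ⟨C, hC⟩ := ((isCompact_closedBall t₀ 1).prod hK).exists_bound_of_continuousOn
    hF'.continuousOn
  refine (hasDerivAt_integral_of_dominated_loc_of_deriv_le (Metric.closedBall_mem_nhds t₀ one_pos)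
    (.of_forall fun t => (hF t).aestronglyMeasurable)
    ((hF t₀).continuousOn.integrableOn_compact hK)
    (hF'.comp (Continuous.prodMk_right t₀)).aestronglyMeasurable
    (ae_restrict_of_forall_mem hK.measurableSet fun x hx t ht => hC (t, x) ⟨ht, hx⟩)
    (integrableOn_const hK.measure_lt_top.ne) (ae_of_all _ fun x t _ => hderiv t x)).2

section DualObjective

variable {X ι : Type*} [TopologicalSpace X] [MeasurableSpace X] [OpensMeasurableSpace X]
  [Fintype ι] (μ : Measure X) (K : Set X) (φ : X → ι → ℝ) (y : ι → ℝ)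

noncomputable def dualObjective (c : ι → ℝ) : ℝ :=
  ∫ x in K, Real.exp (c ⬝ᵥ φ x) ∂μ - c ⬝ᵥ y

variable {μ K φ}

theorem continuous_dualObjective [IsLocallyFiniteMeasure μ] (hK : IsCompact K)
    (hφ : Continuous φ) : Continuous (dualObjective μ K φ y) :=
  (continuous_parametric_integral_of_continuous (by fun_prop) hK).sub (by fun_prop)

theorem dualObjective_smul_ge [T2Space X] [IsLocallyFiniteMeasure μ] (hK : IsCompact K)
    (hφ : Continuous φ) {s : ℝ} (hs : 0 ≤ s) (u : ι → ℝ) :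
    s ^ 2 / 2 * ∫ x in K, max (u ⬝ᵥ φ x) 0 ^ 2 ∂μ - s * (u ⬝ᵥ y) ≤
      dualObjective μ K φ y (s • u) := by
  have hexp (t : ℝ) : max t 0 ^ 2 / 2 ≤ Real.exp t := by
    rcases le_total t 0 with ht | ht
    · simp [max_eq_right ht, Real.exp_nonneg]
    · nlinarith [Real.quadratic_le_exp_of_nonneg ht, max_eq_left ht]
  have hint {f : X → ℝ} (hf : Continuous f) : IntegrableOn f K μ :=
    hf.continuousOn.integrableOn_compact hK
  rw [dualObjective, smul_dotProduct, smul_eq_mul, ← integral_const_mul]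
  gcongr with x
  · exact hint (by fun_prop)
  · exact hint (by fun_prop)
  · exact hK.measurableSet.nullMeasurableSet
  calc s ^ 2 / 2 * max (u ⬝ᵥ φ x) 0 ^ 2 = (s * max (u ⬝ᵥ φ x) 0) ^ 2 / 2 := by ring
    _ = max (s • u ⬝ᵥ φ x) 0 ^ 2 / 2 := by
        rw [mul_max_of_nonneg _ _ hs, mul_zero, smul_dotProduct, smul_eq_mul]
    _ ≤ Real.exp (s • u ⬝ᵥ φ x) := hexp _

theorem exists_mul_norm_le_dualObjective [T2Space X] [IsLocallyFiniteMeasure μ]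
    (hK : IsCompact K) (hφ : Continuous φ)
    (hdich : ∀ c ≠ 0, 0 < ∫ x in K, max (c ⬝ᵥ φ x) 0 ^ 2 ∂μ ∨ c ⬝ᵥ y < 0) :
    ∃ η > 0, ∃ R, ∀ c, R ≤ ‖c‖ → η * ‖c‖ ≤ dualObjective μ K φ y c := by
  set A : (ι → ℝ) → ℝ := fun u => ∫ x in K, max (u ⬝ᵥ φ x) 0 ^ 2 ∂μ
  have hA : Continuous A := continuous_parametric_integral_of_continuous (by fun_prop) hK
  have hS := isCompact_sphere (0 : ι → ℝ) 1
  obtain ⟨η, hη, hηS⟩ : ∃ η > 0, ∀ u ∈ Metric.sphere (0 : ι → ℝ) 1,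
      η ≤ max (A u) (-(u ⬝ᵥ y)) := by
    rcases (Metric.sphere (0 : ι → ℝ) 1).eq_empty_or_nonempty with he | hne
    · exact ⟨1, one_pos, by simp [he]⟩
    obtain ⟨u₀, hu₀, hmin⟩ := hS.exists_isMinOn (f := fun u => max (A u) (-(u ⬝ᵥ y))) hne
      (by fun_prop : Continuous _).continuousOn
    refine ⟨_, ?_, hmin⟩
    rcases hdich u₀ (Metric.ne_of_mem_sphere hu₀ one_ne_zero) with h | h
    · exact lt_max_of_lt_left h
    · exact lt_max_of_lt_right (neg_pos.mpr h)
  obtain ⟨M, hM⟩ := hS.exists_bound_of_continuousOn (f := fun u => u ⬝ᵥ y)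
    (by fun_prop : Continuous _).continuousOn
  refine ⟨η, hη, 2 * (|M| + η) / η, fun c hc => ?_⟩
  have hcpos : 0 < ‖c‖ := lt_of_lt_of_le (by positivity) hc
  set u := ‖c‖⁻¹ • c
  have hu : u ∈ Metric.sphere (0 : ι → ℝ) 1 := by
    simp [u, norm_smul, hcpos.ne']
  have hcu : ‖c‖ • u = c := smul_inv_smul₀ hcpos.ne' c
  have key := dualObjective_smul_ge (μ := μ) y hK hφ hcpos.le u
  rw [hcu] at key
  have hAu : 0 ≤ A u := integral_nonneg fun x => sq_nonneg _
  have hB : |u ⬝ᵥ y| ≤ |M| := (hM u hu).trans (le_abs_self M)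
  have hcη : 2 * (|M| + η) ≤ ‖c‖ * η := (div_le_iff₀ hη).mp hc
  rcases le_max_iff.mp (hηS u hu) with h | h
  · nlinarith [abs_le.mp hB, mul_le_mul_of_nonneg_left h (sq_nonneg ‖c‖)]
  · nlinarith [mul_nonneg (sq_nonneg ‖c‖) hAu]

theorem tendsto_dualObjective_cocompact [T2Space X] [IsLocallyFiniteMeasure μ]
    (hK : IsCompact K) (hφ : Continuous φ)
    (hdich : ∀ c ≠ 0, 0 < ∫ x in K, max (c ⬝ᵥ φ x) 0 ^ 2 ∂μ ∨ c ⬝ᵥ y < 0) :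
    Tendsto (dualObjective μ K φ y) (cocompact _) atTop := by
  obtain ⟨η, hη, R, hR⟩ := exists_mul_norm_le_dualObjective y hK hφ hdich
  refine tendsto_atTop_mono' _ ?_ (tendsto_norm_cocompact_atTop.const_mul_atTop hη)
  filter_upwards [tendsto_norm_cocompact_atTop.eventually_ge_atTop R] with c hc
  exact hR c hc

theorem apply_eq_setIntegral_of_isMinOn [T2Space X] [IsLocallyFiniteMeasure μ]
    (hK : IsCompact K) (hφ : Continuous φ) {c : ι → ℝ}
    (hc : IsMinOn (dualObjective μ K φ y) univ c) (i : ι) :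
    y i = ∫ x in K, φ x i * Real.exp (c ⬝ᵥ φ x) ∂μ := by
  classical
  set e : ι → ℝ := Pi.single i 1
  have hderiv : HasDerivAt (fun t : ℝ => dualObjective μ K φ y (c + t • e))
      ((∫ x in K, Real.exp (c ⬝ᵥ φ x + 0 * φ x i) * φ x i ∂μ) - y i) 0 := by
    have hint := hasDerivAt_setIntegral_of_continuous hK (μ := μ)
      (F := fun (t : ℝ) x => Real.exp (c ⬝ᵥ φ x + t * φ x i))
      (F' := fun (t : ℝ) x => Real.exp (c ⬝ᵥ φ x + t * φ x i) * φ x i) (fun t => by fun_prop)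
      (by fun_prop) (fun t x => ((hasDerivAt_mul_const (φ x i)).const_add _).exp) 0
    refine (hint.sub ((hasDerivAt_mul_const (y i)).const_add (c ⬝ᵥ y))).congr_of_eventuallyEq
      (.of_forall fun t => ?_)
    simp [dualObjective, e, add_dotProduct, smul_dotProduct, single_dotProduct]
  have hmin : IsLocalMin (fun t : ℝ => dualObjective μ K φ y (c + t • e)) 0 :=
    .of_forall fun t => by simpa using hc (mem_univ (c + t • e))
  have := hmin.hasDerivAt_eq_zero hderiv
  simp only [zero_mul, add_zero] at this
  simp_rw [mul_comm (φ _ i)]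
  linarith

end DualObjective

theorem integral_sq_posPart_pos_or_dotProduct_neg {n m : ℕ} {U K : Set (Fin n → ℝ)}
    (hU : IsOpen U) (hUne : U.Nonempty) (hK : K = closure U) (hKc : IsCompact K)
    {μ : Measure (Fin n → ℝ)} [IsLocallyFiniteMeasure μ] (hac : volume.restrict K ≪ μ)
    {y : MomSpace n m} (hy : y ∈ interior (RepCone n m K)) {c : Exponent n m → ℝ}
    (hc : c ≠ 0) :
    0 < ∫ x in K, max (c ⬝ᵥ Lmap n m x) 0 ^ 2 ∂μ ∨ c ⬝ᵥ y < 0 := by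
  have hUK : U ⊆ K := hK ▸ subset_closure
  refine or_iff_not_imp_left.mpr fun hA =>
    dotProduct_neg_of_mem_interior_repCone hKc (hUne.mono (interior_maximal hUK hU)) hy hc ?_
  set f : (Fin n → ℝ) → ℝ := fun x => max (c ⬝ᵥ Lmap n m x) 0 ^ 2
  have hf : Continuous f := by fun_prop
  have hfK : f =ᵐ[μ.restrict K] 0 :=
    (integral_eq_zero_iff_of_nonneg (fun _ => sq_nonneg _)
      (hf.continuousOn.integrableOn_compact hKc)).mp
        (le_antisymm (not_lt.mp hA) (integral_nonneg fun _ => sq_nonneg _))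
  have hacU : volume.restrict U ≪ μ.restrict K := by
    rw [← Measure.restrict_restrict_of_subset hUK]
    exact (hac.restrict U).trans
      (Measure.absolutelyContinuous_of_le (Measure.restrict_mono hUK le_rfl))
  have hfU : EqOn f 0 U :=
    Measure.eqOn_open_of_ae_eq (hacU.ae_le hfK) hU hf.continuousOn continuousOn_const
  have hclosed : IsClosed {x | c ⬝ᵥ Lmap n m x ≤ 0} := isClosed_le (by fun_prop) continuous_const
  have hUle : closure U ⊆ {x | c ⬝ᵥ Lmap n m x ≤ 0} :=
    closure_minimal (fun x hx => by simpa [f] using hfU hx) hclosed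
  exact fun x hx => hUle (hK ▸ hx)

/-- Corollary (compact case): every `y` in the interior of `R_{2d}(K)` has a
representing measure of the form `dν = e^p dμ` for some polynomial `p` of degree
≤ 2d, i.e. `y_α = ∫_K x^α e^{p(x)} dμ(x)` for all `|α| ≤ 2d`. -/
theorem stmt16 {n d : ℕ} (U K : Set (Fin n → ℝ))
    (hU : IsOpen U) (hUne : U.Nonempty) (hUb : Bornology.IsBounded U)
    (hK : K = closure U)
    (ρ : (Fin n → ℝ) → ℝ≥0∞) (hρmeas : Measurable ρ)
    (hρpos : ∀ x ∈ K, 0 < ρ x)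
    (μ : Measure (Fin n → ℝ)) (hμ : μ = (volume.restrict K).withDensity ρ)
    [IsFiniteMeasure μ]
    (y : MomSpace n (2 * d)) (hy : y ∈ interior (RepCone n (2 * d) K)) :
    ∃ p : MvPolynomial (Fin n) ℝ, p.totalDegree ≤ 2 * d ∧
      ∀ α : {α : Fin n →₀ ℕ // (α.sum fun _ e => e) ≤ 2 * d},
        y α = ∫ x in K, evalMono x α.1 * Real.exp (MvPolynomial.eval x p) ∂μ := by
  have hKc : IsCompact K := hK ▸ hUb.isCompact_closure
  have hac : volume.restrict K ≪ μ := hμ ▸ withDensity_absolutelyContinuous'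
    hρmeas.aemeasurable (ae_restrict_of_forall_mem hKc.measurableSet fun x hx => (hρpos x hx).ne')
  have hφ := continuous_Lmap n (2 * d)
  obtain ⟨c, hc⟩ := (continuous_dualObjective y hKc hφ).exists_forall_le
    (tendsto_dualObjective_cocompact y hKc hφ fun c hc =>
      integral_sq_posPart_pos_or_dotProduct_neg hU hUne hK hKc hac hy hc)
  refine ⟨polyOf c, totalDegree_polyOf c, fun α => ?_⟩
  simp_rw [eval_polyOf]
  exact apply_eq_setIntegral_of_isMinOn y hKc hφ (fun c' _ => hc c') α
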